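/- Let a, b, c ∈ L with a ≠ 0, b ≠ 0, let a', b' ∈ L satisfy a'^q = a − [1] and b'^q = b − [1], and assume ⟨c⟩_m ≠ 0 for all m. Then the contiguous relation ₂F₁(a', b; c; aX) − ₂F₁(a, b'; c; bX) = (a − b)·₂F₁(a, b; c; X) holds in L⟦X⟧; equivalently, for every m ∈ ℕ one has a^{q^m}·⟨a'⟩_m·⟨b⟩_m − b^{q^m}·⟨a⟩_m·⟨b'⟩_m = (a − b)·⟨a⟩_m·⟨b⟩_m. -/
import Mathlib


/-- The Carlitz bracket `[i] = x^{q^i} - x`. -/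
def br (q : ℕ) {L : Type*} [Field L] (x : L) (i : ℕ) : L := x ^ q ^ i - x

/-- The Pochhammer-type symbol `⟨a⟩_m = ([0]-a)^{q^m} ([1]-a)^{q^{m-1}} ⋯ ([m-1]-a)^q`. -/
def poch (q : ℕ) {L : Type*} [Field L] (x a : L) (m : ℕ) : L :=
  ∏ k ∈ Finset.range m, (br q x k - a) ^ q ^ (m - k)

/-- The Carlitz factorial `D_0 = 1`, `D_m = [m]·D_{m-1}^q`. -/
def DD (q : ℕ) {L : Type*} [Field L] (x : L) : ℕ → L
  | 0 => 1
  | m + 1 => br q x (m + 1) * (DD q x m) ^ q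

theorem poch_succ {q : ℕ} {L : Type*} [Field L] (x t : L) (m : ℕ) :
    poch q x t (m + 1) = (poch q x t m) ^ q * (br q x m - t) ^ q := by
  unfold poch
  rw [Finset.prod_range_succ, ← Finset.prod_pow]
  congr 1
  · refine Finset.prod_congr rfl fun k hk => ?_
    rw [← pow_mul, ← pow_succ]
    have h : m + 1 - k = m - k + 1 := by
      have := Finset.mem_range.mp hk; omega
    rw [h]
  · have h : m + 1 - m = 1 := by omega
    rw [h, pow_one]

theorem key_lemma {p v q : ℕ} (hp : p.Prime) (hv : 0 < v) (hq : q = p ^ v)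
    {L : Type*} [Field L] [CharP L p] (x a a' : L)
    (ha' : a' ^ q = a - br q x 1) (m : ℕ) :
    a ^ q ^ m * poch q x a' m = (a - br q x m) * poch q x a m := by
  haveI := Fact.mk hp
  have hsub : ∀ y z : L, (y - z) ^ q = y ^ q - z ^ q := by
    intro y z; subst hq; exact sub_pow_char_pow y z v
  induction m with
  | zero => simp [poch, br]
  | succ m ih =>
    have hb1 : (br q x m - a') ^ q = br q x (m + 1) - a := by
      have hbm : br q x m ^ q = x ^ q ^ (m + 1) - x ^ q := by
        rw [br, hsub, ← pow_mul, ← pow_succ]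
      rw [hsub, ha', hbm, br, br, pow_one]
      ring
    calc a ^ q ^ (m + 1) * poch q x a' (m + 1)
        = (a ^ q ^ m * poch q x a' m) ^ q * (br q x m - a') ^ q := by
          rw [poch_succ, pow_succ, pow_mul, mul_pow]; ring
      _ = ((a - br q x m) * poch q x a m) ^ q * (br q x (m + 1) - a) := by
          rw [ih, hb1]
      _ = (a - br q x (m + 1)) * poch q x a (m + 1) := by
          rw [poch_succ, mul_pow]
          simp only [hsub]
          ring

/-- Contiguous relation $F(T_1(a),b;c;az)-F(a,T_1(b);c;bz)=(a-b)F(a,b;c;z)$,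
in its (equivalent) coefficientwise form. -/
theorem stmt5 {p v q : ℕ} (hp : p.Prime) (hv : 0 < v) (hq : q = p ^ v)
    {L : Type*} [Field L] [CharP L p] (x : L)
    (a b c a' b' : L) (ha : a ≠ 0) (hb : b ≠ 0)
    (ha' : a' ^ q = a - br q x 1) (hb' : b' ^ q = b - br q x 1)
    (hc : ∀ m : ℕ, poch q x c m ≠ 0) (m : ℕ) :
    a ^ q ^ m * poch q x a' m * poch q x b m
        - b ^ q ^ m * poch q x a m * poch q x b' m
      = (a - b) * (poch q x a m * poch q x b m) := by
  have h1 := key_lemma hp hv hq x a a' ha' m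
  have h2 := key_lemma hp hv hq x b b' hb' m
  calc a ^ q ^ m * poch q x a' m * poch q x b m
      - b ^ q ^ m * poch q x a m * poch q x b' m
      = (a ^ q ^ m * poch q x a' m) * poch q x b m
        - (b ^ q ^ m * poch q x b' m) * poch q x a m := by ring
    _ = ((a - br q x m) * poch q x a m) * poch q x b m
        - ((b - br q x m) * poch q x b m) * poch q x a m := by rw [h1, h2]
    _ = (a - b) * (poch q x a m * poch q x b m) := by ring
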